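/- arXiv:1202.6282 — 2 statements merged into one kernel-verified Lean document; each statement's English description precedes it below -/
import Mathlib

section
/- Under the same hypotheses, ∂_x ω(ξ; x, t) = −(1 / a(x,t)) · exp( ∫_ξ^x (∂_τ a / a²)(η, ω(η; x, t)) dη ); in particular ∂_x ω(ξ; x, t) = −(1/a(x,t)) · ∂_t ω(ξ; x, t). -/
/-!
For two solutions `u, v` of `u' = f(s, u)`, the difference `w = u - v` solves the linear
equation `w' = m w` with `m(s) = ∫₀¹ ∂_τ f(s, v + θ (u - v)) dθ`, so that exactly
`w(ξ) = w(x) · exp ∫_x^ξ m`. This gives uniqueness, a Gronwall bound, and, since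
`m → ∂_τ f(·, v)` uniformly as `u → v`, the derivative
`∂_t ω(ξ; x, t) = exp ∫_x^ξ ∂_τ f(η, ω(η; x, t)) dη`.
Uniqueness yields the flow identity `ω(ξ; y, t) = ω(ξ; x, ω(x; y, t))`, and
`∂_y ω(x; y, t) = -f(x, t)` at `y = x`, so the chain rule gives `∂_x ω = -(1/a) ∂_t ω`.
Here `f = 1/a` and `∂_τ f = -∂_τ a / a²`.
-/

open Set intervalIntegral Filter Topology Function Real

section LinearizedFlow

variable {α β : ℝ}

theorem hasDerivWithinAt_integral_Icc {m : ℝ → ℝ} (hm : ContinuousOn m (Icc α β)) {x s : ℝ}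
    (hx : x ∈ Icc α β) (hs : s ∈ Icc α β) :
    HasDerivWithinAt (fun r => ∫ η in x..r, m η) (m s) (Icc α β) s :=
  have : Fact (s ∈ Icc α β) := ⟨hs⟩
  integral_hasDerivWithinAt_right ((hm.mono (uIcc_subset_Icc hx hs)).intervalIntegrable)
    (hm.stronglyMeasurableAtFilter_nhdsWithin measurableSet_Icc s) (hm s hs)

theorem eq_mul_exp_integral_of_hasDerivWithinAt {w m : ℝ → ℝ} (hm : ContinuousOn m (Icc α β))
    (hw : ∀ s ∈ Icc α β, HasDerivWithinAt w (m s * w s) (Icc α β) s) {x s : ℝ}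
    (hx : x ∈ Icc α β) (hs : s ∈ Icc α β) :
    w s = w x * exp (∫ η in x..s, m η) := by
  set M : ℝ → ℝ := fun r => ∫ η in x..r, m η
  have hconst : ∀ r ∈ Icc α β,
      HasDerivWithinAt (fun r => w r * exp (-M r)) 0 (Icc α β) r := fun r hr =>
    ((hw r hr).mul (hasDerivWithinAt_integral_Icc hm hx hr).neg.exp).congr_deriv (by ring)
  have h := (convex_Icc α β).norm_image_sub_le_of_norm_hasDerivWithin_le hconst
    (fun _ _ => norm_zero.le) hx hs
  have hMx : M x = 0 := integral_same
  rw [zero_mul, norm_le_zero_iff, sub_eq_zero, hMx, neg_zero, exp_zero, mul_one] at h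
  rw [← h, mul_assoc, ← exp_add, neg_add_cancel, exp_zero, mul_one]

noncomputable def meanDeriv (D : ℝ → ℝ → ℝ) (s τ₀ τ₁ : ℝ) : ℝ :=
  ∫ θ in (0:ℝ)..1, D s (τ₀ + θ * (τ₁ - τ₀))

variable {D : ℝ → ℝ → ℝ}

@[simp]
theorem meanDeriv_self (D : ℝ → ℝ → ℝ) (s τ : ℝ) : meanDeriv D s τ τ = D s τ := by
  simp [meanDeriv]

theorem continuous_meanDeriv (hD : Continuous (uncurry D)) :
    Continuous fun q : ℝ × ℝ × ℝ => meanDeriv D q.1 q.2.1 q.2.2 :=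
  continuous_parametric_intervalIntegral_of_continuous'
    (f := fun (q : ℝ × ℝ × ℝ) θ => D q.1 (q.2.1 + θ * (q.2.2 - q.2.1))) (hD.comp (by fun_prop :
      Continuous fun p : (ℝ × ℝ × ℝ) × ℝ => (p.1.1, p.1.2.1 + p.2 * (p.1.2.2 - p.1.2.1)))) 0 1

theorem sub_eq_meanDeriv_mul {f : ℝ → ℝ} {s : ℝ} (hf : ∀ τ, HasDerivAt f (D s τ) τ)
    (hD : Continuous (D s)) (τ₀ τ₁ : ℝ) : f τ₁ - f τ₀ = meanDeriv D s τ₀ τ₁ * (τ₁ - τ₀) := by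
  have h := integral_unitInterval_deriv_eq_sub (f := f) (z₀ := τ₀) (z₁ := τ₁ - τ₀)
    (hD.comp (by fun_prop)).continuousOn (fun θ _ => hf _)
  simp only [smul_eq_mul, add_sub_cancel] at h
  rw [← h, meanDeriv, mul_comm]

theorem abs_meanDeriv_le {J : Set ℝ} (hJ : Convex ℝ J) {s τ₀ τ₁ L : ℝ} (hτ₀ : τ₀ ∈ J)
    (hτ₁ : τ₁ ∈ J) (hL : ∀ τ ∈ J, |D s τ| ≤ L) : |meanDeriv D s τ₀ τ₁| ≤ L := by
  have h := norm_integral_le_of_norm_le_const (a := 0) (b := 1) (C := L)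
    (f := fun θ => D s (τ₀ + θ * (τ₁ - τ₀))) fun θ hθ =>
      hL _ (hJ.add_smul_sub_mem hτ₀ hτ₁ (uIcc_of_le (zero_le_one' ℝ) ▸ uIoc_subset_uIcc hθ))
  simpa [meanDeriv] using h

variable {f : ℝ → ℝ → ℝ}

theorem sub_eq_mul_exp_integral_meanDeriv (hf : ∀ s τ, HasDerivAt (f s) (D s τ) τ)
    (hD : Continuous (uncurry D)) {u v : ℝ → ℝ}
    (hu : ∀ s ∈ Icc α β, HasDerivWithinAt u (f s (u s)) (Icc α β) s)
    (hv : ∀ s ∈ Icc α β, HasDerivWithinAt v (f s (v s)) (Icc α β) s) {x s : ℝ}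
    (hx : x ∈ Icc α β) (hs : s ∈ Icc α β) :
    u s - v s = (u x - v x) * exp (∫ η in x..s, meanDeriv D η (v η) (u η)) := by
  have hcont : ∀ w : ℝ → ℝ, (∀ s ∈ Icc α β, HasDerivWithinAt w (f s (w s)) (Icc α β) s) →
      ContinuousOn w (Icc α β) := fun w hw s hs => (hw s hs).continuousWithinAt
  refine eq_mul_exp_integral_of_hasDerivWithinAt (w := u - v) ?_ (fun r hr => ?_) hx hs
  · exact (continuous_meanDeriv hD).comp_continuousOn
      (continuousOn_id.prodMk ((hcont v hv).prodMk (hcont u hu)))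
  · rw [Pi.sub_apply, ← sub_eq_meanDeriv_mul (hf r) (hD.uncurry_left r)]
    exact (hu r hr).sub (hv r hr)

theorem ODE_solution_unique_of_continuous_deriv (hf : ∀ s τ, HasDerivAt (f s) (D s τ) τ)
    (hD : Continuous (uncurry D)) {u v : ℝ → ℝ}
    (hu : ∀ s ∈ Icc α β, HasDerivWithinAt u (f s (u s)) (Icc α β) s)
    (hv : ∀ s ∈ Icc α β, HasDerivWithinAt v (f s (v s)) (Icc α β) s) {x s : ℝ}
    (hx : x ∈ Icc α β) (hs : s ∈ Icc α β) (hxuv : u x = v x) : u s = v s := by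
  rw [← sub_eq_zero, sub_eq_mul_exp_integral_meanDeriv hf hD hu hv hx hs, hxuv, sub_self,
    zero_mul]

theorem abs_sub_le_mul_exp_of_solutions (hf : ∀ s τ, HasDerivAt (f s) (D s τ) τ)
    (hD : Continuous (uncurry D)) {J : Set ℝ} (hJ : Convex ℝ J) {L : ℝ}
    (hL : ∀ s ∈ Icc α β, ∀ τ ∈ J, |D s τ| ≤ L) {u v : ℝ → ℝ}
    (hu : ∀ s ∈ Icc α β, HasDerivWithinAt u (f s (u s)) (Icc α β) s)
    (hv : ∀ s ∈ Icc α β, HasDerivWithinAt v (f s (v s)) (Icc α β) s)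
    (huJ : ∀ s ∈ Icc α β, u s ∈ J) (hvJ : ∀ s ∈ Icc α β, v s ∈ J) {x s : ℝ}
    (hx : x ∈ Icc α β) (hs : s ∈ Icc α β) :
    |u s - v s| ≤ |u x - v x| * exp (L * (β - α)) := by
  have hint : |∫ η in x..s, meanDeriv D η (v η) (u η)| ≤ L * |s - x| :=
    norm_integral_le_of_norm_le_const (f := fun η => meanDeriv D η (v η) (u η)) fun η hη =>
      have hη' := uIcc_subset_Icc hx hs (uIoc_subset_uIcc hη)
      abs_meanDeriv_le hJ (hvJ η hη') (huJ η hη') (hL η hη')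
  have hL0 : 0 ≤ L := (abs_nonneg _).trans (hL x hx _ (huJ x hx))
  rw [sub_eq_mul_exp_integral_meanDeriv hf hD hu hv hx hs, abs_mul, abs_exp]
  gcongr
  exact (le_abs_self _).trans (hint.trans (mul_le_mul_of_nonneg_left
    (abs_sub_le_of_le_of_le hs.1 hs.2 hx.1 hx.2) hL0))

theorem tendsto_integral_meanDeriv (hD : Continuous (uncurry D)) {J : Set ℝ} (hJ : IsCompact J)
    {ι : Type*} {l : Filter ι} [l.IsCountablyGenerated] {u : ι → ℝ → ℝ} {v : ℝ → ℝ}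
    (hu : ∀ᶠ p in l, ContinuousOn (u p) (Icc α β)) (huJ : ∀ᶠ p in l, ∀ s ∈ Icc α β, u p s ∈ J)
    (hv : ContinuousOn v (Icc α β)) (hvJ : ∀ s ∈ Icc α β, v s ∈ J)
    (huv : TendstoUniformlyOn u v l (Icc α β)) {x ξ : ℝ} (hx : x ∈ Icc α β)
    (hξ : ξ ∈ Icc α β) :
    Tendsto (fun p => ∫ η in x..ξ, meanDeriv D η (v η) (u p η)) l
      (𝓝 (∫ η in x..ξ, D η (v η))) := by
  have hQ := ((isCompact_Icc (a := α) (b := β)).prod (hJ.prod hJ)).uniformContinuousOn_of_continuous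
    (continuous_meanDeriv hD).continuousOn
  have hconv : TendstoUniformlyOn (fun p η => meanDeriv D η (v η) (u p η))
      (fun η => D η (v η)) l (Icc α β) := by
    refine Metric.tendstoUniformlyOn_iff.2 fun ε hε => ?_
    obtain ⟨δ, hδ, hQδ⟩ := Metric.uniformContinuousOn_iff.1 hQ ε hε
    filter_upwards [Metric.tendstoUniformlyOn_iff.1 huv δ hδ, huJ] with p hp hpJ η hη
    rw [← meanDeriv_self D η (v η)]
    refine hQδ (η, v η, v η) ⟨hη, hvJ η hη, hvJ η hη⟩ (η, v η, u p η) ⟨hη, hvJ η hη, hpJ η hη⟩ ?_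
    simpa [Prod.dist_eq] using hp η hη
  refine (hconv.mono (uIcc_subset_Icc hx hξ)).tendsto_intervalIntegral_of_continuousOn ?_
  filter_upwards [hu] with p hp
  exact ((continuous_meanDeriv hD).comp_continuousOn
    (continuousOn_id.prodMk (hv.prodMk hp))).mono (uIcc_subset_Icc hx hξ)

theorem abs_sub_le_of_solution {C : ℝ} (hfC : ∀ s τ, |f s τ| ≤ C) {u : ℝ → ℝ}
    (hu : ∀ s ∈ Icc α β, HasDerivWithinAt u (f s (u s)) (Icc α β) s) {x s : ℝ}
    (hx : x ∈ Icc α β) (hs : s ∈ Icc α β) : |u s - u x| ≤ C * |s - x| :=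
  (convex_Icc α β).norm_image_sub_le_of_norm_hasDerivWithin_le hu (fun s _ => hfC s (u s)) hx hs

theorem tendstoUniformlyOn_solution_initialValue (hf : ∀ s τ, HasDerivAt (f s) (D s τ) τ)
    (hD : Continuous (uncurry D)) {J : Set ℝ} (hJ : IsCompact J) (hJc : Convex ℝ J)
    {U : ℝ → ℝ → ℝ} {x p₀ : ℝ} (hx : x ∈ Icc α β)
    (hU : ∀ᶠ p in 𝓝 p₀, ∀ s ∈ Icc α β,
      HasDerivWithinAt (U p) (f s (U p s)) (Icc α β) s ∧ U p s ∈ J)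
    (hUx : ∀ p, U p x = p) :
    TendstoUniformlyOn U (U p₀) (𝓝 p₀) (Icc α β) := by
  obtain ⟨L, hL⟩ := ((isCompact_Icc (a := α) (b := β)).prod hJ).exists_bound_of_continuousOn
    hD.continuousOn
  have hU₀ := hU.self_of_nhds
  have hclose : ∀ᶠ p in 𝓝 p₀, ∀ s ∈ Icc α β,
      |U p s - U p₀ s| ≤ |p - p₀| * exp (L * (β - α)) := by
    filter_upwards [hU] with p hp s hs
    simpa only [hUx] using abs_sub_le_mul_exp_of_solutions hf hD hJc
      (fun s hs τ hτ => hL (s, τ) ⟨hs, hτ⟩) (fun s hs => (hp s hs).1)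
      (fun s hs => (hU₀ s hs).1) (fun s hs => (hp s hs).2) (fun s hs => (hU₀ s hs).2) hx hs
  have h0 : Tendsto (fun p => |p - p₀| * exp (L * (β - α))) (𝓝 p₀) (𝓝 0) := by
    simpa using ((continuous_id.sub continuous_const).abs.mul continuous_const).tendsto
      (f := fun p => |p - p₀| * exp (L * (β - α))) p₀
  refine Metric.tendstoUniformlyOn_iff.2 fun ε hε => ?_
  filter_upwards [hclose, h0.eventually (gt_mem_nhds hε)] with p hp hpε s hs
  rw [dist_comm, Real.dist_eq]
  exact (hp s hs).trans_lt hpε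

theorem hasDerivAt_solution_initialValue (hf : ∀ s τ, HasDerivAt (f s) (D s τ) τ)
    (hD : Continuous (uncurry D)) {J : Set ℝ} (hJ : IsCompact J) (hJc : Convex ℝ J)
    {U : ℝ → ℝ → ℝ} {x ξ p₀ : ℝ} (hx : x ∈ Icc α β) (hξ : ξ ∈ Icc α β)
    (hU : ∀ᶠ p in 𝓝 p₀, ∀ s ∈ Icc α β,
      HasDerivWithinAt (U p) (f s (U p s)) (Icc α β) s ∧ U p s ∈ J)
    (hUx : ∀ p, U p x = p) :
    HasDerivAt (fun p => U p ξ) (exp (∫ η in x..ξ, D η (U p₀ η))) p₀ := by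
  have hU₀ := hU.self_of_nhds
  have hlim := tendsto_integral_meanDeriv hD hJ
    (hU.mono fun p hp s hs => (hp s hs).1.continuousWithinAt) (hU.mono fun p hp s hs => (hp s hs).2)
    (fun s hs => (hU₀ s hs).1.continuousWithinAt) (fun s hs => (hU₀ s hs).2)
    (tendstoUniformlyOn_solution_initialValue hf hD hJ hJc hx hU hUx) hx hξ
  rw [hasDerivAt_iff_tendsto_slope]
  refine (((continuous_exp.tendsto _).comp hlim).mono_left nhdsWithin_le_nhds).congr' ?_
  filter_upwards [self_mem_nhdsWithin, nhdsWithin_le_nhds hU] with p hp hUp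
  rw [comp_apply, slope_def_field, sub_eq_mul_exp_integral_meanDeriv hf hD
    (fun s hs => (hUp s hs).1) (fun s hs => (hU₀ s hs).1) hx hξ, hUx, hUx,
    mul_div_cancel_left₀ _ (sub_ne_zero.2 hp)]

theorem hasDerivAt_solution_initialValue_of_abs_le (hf : ∀ s τ, HasDerivAt (f s) (D s τ) τ)
    (hD : Continuous (uncurry D)) {C : ℝ} (hfC : ∀ s τ, |f s τ| ≤ C) {U : ℝ → ℝ → ℝ}
    {x ξ p₀ : ℝ} (hx : x ∈ Icc α β) (hξ : ξ ∈ Icc α β)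
    (hU : ∀ p, ∀ s ∈ Icc α β, HasDerivWithinAt (U p) (f s (U p s)) (Icc α β) s)
    (hUx : ∀ p, U p x = p) :
    HasDerivAt (fun p => U p ξ) (exp (∫ η in x..ξ, D η (U p₀ η))) p₀ := by
  refine hasDerivAt_solution_initialValue hf hD (isCompact_closedBall p₀ (C * (β - α) + 1))
    (convex_closedBall _ _) hx hξ ?_ hUx
  filter_upwards [Metric.ball_mem_nhds p₀ one_pos] with p hp s hs
  refine ⟨hU p s hs, ?_⟩
  have hC : 0 ≤ C := (abs_nonneg _).trans (hfC x p)
  have hUp := abs_sub_le_of_solution hfC (hU p) hx hs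
  rw [hUx] at hUp
  rw [Metric.mem_ball, Real.dist_eq] at hp
  rw [Metric.mem_closedBall, Real.dist_eq]
  calc |U p s - p₀| ≤ |U p s - p| + |p - p₀| := abs_sub_le _ _ _
    _ ≤ C * (β - α) + 1 := add_le_add (hUp.trans (mul_le_mul_of_nonneg_left
        (abs_sub_le_of_le_of_le hs.1 hs.2 hx.1 hx.2) hC)) hp.le

theorem hasDerivWithinAt_solution_initialPoint {U : ℝ → ℝ → ℝ} {C x t : ℝ} (hx : x ∈ Icc α β)
    (hf : ContinuousAt (uncurry f) (x, t)) (hfC : ∀ s τ, |f s τ| ≤ C)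
    (hU : ∀ y ∈ Icc α β, ∀ s ∈ Icc α β, HasDerivWithinAt (U y) (f s (U y s)) (Icc α β) s)
    (hUy : ∀ y, U y y = t) :
    HasDerivWithinAt (fun y => U y x) (-f x t) (Icc α β) x := by
  have hC : 0 ≤ C := (abs_nonneg _).trans (hfC x t)
  rw [hasDerivWithinAt_iff_isLittleO, Asymptotics.isLittleO_iff]
  intro ε hε
  obtain ⟨δ, hδ, hfδ⟩ := Metric.continuousAt_iff.1 hf ε hε
  filter_upwards [self_mem_nhdsWithin,
    nhdsWithin_le_nhds (Metric.ball_mem_nhds x (div_pos hδ (by linarith : 0 < C + 1)))]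
    with y hy hyx
  rw [Metric.mem_ball, Real.dist_eq, lt_div_iff₀ (by linarith)] at hyx
  have hsub : uIcc x y ⊆ Icc α β := uIcc_subset_Icc hx hy
  have hnear : ∀ s ∈ uIcc x y, dist (f s (U y s)) (f x t) ≤ ε := fun s hs => by
    have hsx := abs_sub_left_of_mem_uIcc hs
    have hsy : |s - y| ≤ |y - x| := by
      rw [abs_sub_comm]
      exact abs_sub_right_of_mem_uIcc hs
    have hUs := abs_sub_le_of_solution hfC (hU y hy) hy (hsub hs)
    rw [hUy] at hUs
    refine (hfδ (x := (s, U y s)) ?_).le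
    rw [Prod.dist_eq, Real.dist_eq, Real.dist_eq, max_lt_iff]
    constructor <;> nlinarith [abs_nonneg (y - x)]
  have hmvt := (convex_uIcc x y).norm_image_sub_le_of_norm_hasDerivWithin_le
    (f := fun s => U y s - s * f x t)
    (fun s hs => ((hU y hy s (hsub hs)).mono hsub).sub ((hasDerivWithinAt_id s _).mul_const _))
    (by simpa [← Real.dist_eq] using hnear) right_mem_uIcc left_mem_uIcc
  rw [hUy]
  convert hmvt using 2
  · simp only [smul_eq_mul, hUy]
    ring
  · rw [norm_sub_rev]

end LinearizedFlow

theorem ContDiff.continuous_uncurry_deriv {a : ℝ → ℝ → ℝ} (ha : ContDiff ℝ 1 (uncurry a)) :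
    Continuous (uncurry fun s => deriv (a s)) := by
  have h : ∀ s τ, HasDerivAt (a s) (fderiv ℝ (uncurry a) (s, τ) (0, 1)) τ := fun s τ =>
    ((ha.differentiable one_ne_zero (s, τ)).hasFDerivAt).comp_hasDerivAt τ
      ((hasDerivAt_const τ s).prodMk (hasDerivAt_id τ))
  have heq : (uncurry fun s => deriv (a s)) = fun p => fderiv ℝ (uncurry a) p (0, 1) :=
    funext fun p => (h p.1 p.2).deriv
  rw [heq]
  exact (ha.continuous_fderiv one_ne_zero).clm_apply continuous_const

theorem ContDiff.hasDerivAt_one_div {a : ℝ → ℝ → ℝ} (ha : ContDiff ℝ 1 (uncurry a)) {s τ : ℝ}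
    (h0 : a s τ ≠ 0) : HasDerivAt (fun τ => 1 / a s τ) (-deriv (a s) τ / a s τ ^ 2) τ := by
  have hd : DifferentiableAt ℝ (a s) τ :=
    (ha.differentiable one_ne_zero).comp (differentiable_const s |>.prodMk differentiable_id) τ
  simp_rw [one_div]
  exact hd.hasDerivAt.inv h0

/-- For the characteristic flow `ω(ξ; x, t)` of `∂_ξ ω = 1/a(ξ, ω)`, `ω(x; x, t) = t`,
where `a` is `C¹` with `inf |a| > 0`, one has
`∂_x ω(ξ; x, t) = −(1/a(x,t)) · exp ( ∫_ξ^x (∂_τ a / a²)(η, ω(η; x, t)) dη )`;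
in particular `∂_x ω(ξ; x, t) = −(1/a(x,t)) · ∂_t ω(ξ; x, t)`. -/
theorem characteristic_flow_deriv_x
    (a : ℝ → ℝ → ℝ) (ha : ContDiff ℝ 1 (Function.uncurry a))
    (c : ℝ) (hc : 0 < c) (hbound : ∀ ξ τ : ℝ, c ≤ |a ξ τ|)
    (ω : ℝ → ℝ → ℝ → ℝ)
    (hinit : ∀ x t : ℝ, ω x x t = t)
    (hode : ∀ x ∈ Icc (0:ℝ) 1, ∀ t : ℝ, ∀ ξ ∈ Icc (0:ℝ) 1,
      HasDerivWithinAt (fun s => ω s x t) (1 / a ξ (ω ξ x t)) (Icc 0 1) ξ)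
    (ξ x : ℝ) (hξ : ξ ∈ Icc (0:ℝ) 1) (hx : x ∈ Icc (0:ℝ) 1) (t : ℝ) :
    HasDerivWithinAt (fun y => ω ξ y t)
      (-(1 / a x t) * Real.exp (∫ η in ξ..x,
        deriv (fun τ => a η τ) (ω η x t) / (a η (ω η x t)) ^ 2)) (Icc 0 1) x ∧
    ∀ dt : ℝ, HasDerivAt (fun τ => ω ξ x τ) dt t →
      HasDerivWithinAt (fun y => ω ξ y t) (-(1 / a x t) * dt) (Icc 0 1) x := by
  have ha0 : ∀ s τ, a s τ ≠ 0 := fun s τ => abs_pos.1 (hc.trans_le (hbound s τ))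
  have hf : ∀ s τ, HasDerivAt (fun τ => 1 / a s τ) (-deriv (a s) τ / a s τ ^ 2) τ :=
    fun s τ => ha.hasDerivAt_one_div (ha0 s τ)
  have hD : Continuous (uncurry fun s τ => -deriv (a s) τ / a s τ ^ 2) :=
    ha.continuous_uncurry_deriv.neg.div (ha.continuous.pow 2) fun p => pow_ne_zero 2 (ha0 p.1 p.2)
  have hfC : ∀ s τ, |1 / a s τ| ≤ c⁻¹ := fun s τ => by
    simpa [abs_div] using inv_anti₀ hc (hbound s τ)
  have hT : HasDerivAt (fun p => ω ξ x p)
      (exp (∫ η in x..ξ, -deriv (a η) (ω η x t) / a η (ω η x t) ^ 2)) t :=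
    hasDerivAt_solution_initialValue_of_abs_le (U := fun p s => ω s x p) hf hD hfC hx hξ
      (fun p => hode x hx p) (hinit x)
  have hI : HasDerivWithinAt (fun y => ω x y t) (-(1 / a x t)) (Icc 0 1) x :=
    hasDerivWithinAt_solution_initialPoint (f := fun s τ => 1 / a s τ) (U := fun y s => ω s y t)
      hx (continuousAt_const.div (ha.continuous.continuousAt (x := (x, t))) (ha0 x t)) hfC
      (fun y hy => hode y hy t) (fun y => hinit y t)
  have hflow : ∀ y ∈ Icc (0:ℝ) 1, ω ξ y t = ω ξ x (ω x y t) := fun y hy =>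
    ODE_solution_unique_of_continuous_deriv hf hD (hode y hy t) (hode x hx _) hx hξ
      (hinit x _).symm
  have hX := (hT.comp_hasDerivWithinAt_of_eq x hI (hinit x t).symm).congr hflow (hflow x hx)
  have hexp : ∫ η in x..ξ, -deriv (a η) (ω η x t) / a η (ω η x t) ^ 2 =
      ∫ η in ξ..x, deriv (fun τ => a η τ) (ω η x t) / (a η (ω η x t)) ^ 2 := by
    rw [integral_symm]
    simp [neg_div]
  refine ⟨?_, fun dt hdt => ?_⟩
  · rw [← hexp, mul_comm]
    exact hX
  · rw [hdt.unique hT, mul_comm]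
    exact hX
end

section
/- Let V, W be Banach spaces, 𝒜 : V → W an isomorphism, and ℬ : V → W bounded such that (ℬ𝒜⁻¹)² : W → W is compact. Then 𝒜 + ℬ : V → W is a Fredholm operator of index zero. -/
/-!
With `D = B A⁻¹` we have `A + B = (1 + D) A`, so it suffices to treat `S = 1 + D`. The operator
`T = 1 - D² = (1 - D)(1 + D) = (1 + D)(1 - D)` is a compact perturbation of the identity that
commutes with `S`. By Riesz theory, the increasing chain `ker Tⁿ` and the decreasing chain
`range Tⁿ` of closed subspaces both stabilise (a strict step would give, via Riesz's lemma, a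
bounded sequence whose images under the compact `T - 1` stay `1` apart), so
`W = ker Tⁿ ⊕ range Tⁿ` with `ker Tⁿ` finite-dimensional and `range Tⁿ` closed. Both summands are
`S`-invariant, `ker S ⊆ ker T ⊆ ker Tⁿ` and `range Tⁿ ⊆ range T ⊆ range S`, so the kernel and the
cokernel of `S` are those of its restriction to `ker Tⁿ`, which has index zero by rank–nullity.
-/

open Filter Topology Module Set

section Compactness

variable {𝕜 E F : Type*} [NontriviallyNormedField 𝕜] [NormedAddCommGroup E] [NormedSpace 𝕜 E]
  [NormedAddCommGroup F] [NormedSpace 𝕜 F]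

lemma IsCompactOperator.exists_strictMono_tendsto {K : E →L[𝕜] F} (hK : IsCompactOperator K)
    {u : ℕ → E} {C : ℝ} (hu : ∀ n, ‖u n‖ ≤ C) :
    ∃ (z : F) (φ : ℕ → ℕ), StrictMono φ ∧ Tendsto (fun n ↦ K (u (φ n))) atTop (𝓝 z) := by
  obtain ⟨M, hM, hKM⟩ := hK.image_closedBall_subset_compact (f := (K : E →ₗ[𝕜] F)) C
  obtain ⟨z, -, φ, hφ, hlim⟩ :=
    hM.tendsto_subseq fun n ↦ hKM ⟨u n, mem_closedBall_zero_iff.2 (hu n), rfl⟩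
  exact ⟨z, φ, hφ, hlim⟩

lemma IsCompactOperator.exists_lt_norm_sub_lt {K : E →L[𝕜] F} (hK : IsCompactOperator K)
    {u : ℕ → E} {C : ℝ} (hu : ∀ n, ‖u n‖ ≤ C) {ε : ℝ} (hε : 0 < ε) :
    ∃ m n, m < n ∧ ‖K (u n) - K (u m)‖ < ε := by
  obtain ⟨z, φ, hφ, hlim⟩ := hK.exists_strictMono_tendsto hu
  obtain ⟨N, hN⟩ := Metric.cauchySeq_iff'.1 hlim.cauchySeq ε hε
  exact ⟨φ N, φ (N + 1), hφ N.lt_succ_self, by simpa [dist_eq_norm] using hN (N + 1) N.le_succ⟩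

lemma Submodule.exists_norm_le_one_le_norm_sub_of_lt {c : 𝕜} (hc : 1 < ‖c‖) {R : ℝ}
    (hR : ‖c‖ < R) {F G : Submodule 𝕜 E} (hF : IsClosed (F : Set E)) (hFG : F < G) :
    ∃ x ∈ G, ‖x‖ ≤ R ∧ ∀ y ∈ F, 1 ≤ ‖x - y‖ := by
  obtain ⟨x, hxG, hxF⟩ := SetLike.exists_of_lt hFG
  obtain ⟨x₀, hx₀, hsep⟩ := riesz_lemma_of_norm_lt hc hR (F := F.comap G.subtype)
    (hF.preimage continuous_subtype_val) ⟨⟨x, hxG⟩, hxF⟩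
  exact ⟨x₀, x₀.2, hx₀, fun y hy ↦ hsep ⟨y, hFG.le hy⟩ hy⟩

end Compactness

section Fitting

variable {R M : Type*} [Ring R] [AddCommGroup M] [Module R M]

lemma Module.End.range_pow_add_eq_of_range_pow_succ_eq {f : End R M} {k : ℕ}
    (h : LinearMap.range (f ^ (k + 1)) = LinearMap.range (f ^ k)) :
    ∀ m, LinearMap.range (f ^ (k + m)) = LinearMap.range (f ^ k)
  | 0 => rfl
  | m + 1 => by
    rw [← add_assoc, pow_succ', Module.End.mul_eq_comp, LinearMap.range_comp,
      range_pow_add_eq_of_range_pow_succ_eq h m, ← LinearMap.range_comp, ← Module.End.mul_eq_comp,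
      ← pow_succ', h]

lemma Module.End.isCompl_ker_pow_range_pow {f : End R M} {n : ℕ}
    (hker : LinearMap.ker (f ^ (n + n)) = LinearMap.ker (f ^ n))
    (hrange : LinearMap.range (f ^ (n + n)) = LinearMap.range (f ^ n)) :
    IsCompl (LinearMap.ker (f ^ n)) (LinearMap.range (f ^ n)) := by
  constructor
  · refine Submodule.disjoint_def.2 fun x hx ⟨y, hy⟩ ↦ ?_
    have : y ∈ LinearMap.ker (f ^ (n + n)) := by
      rw [LinearMap.mem_ker, pow_add, Module.End.mul_apply, hy]; exact hx
    rw [hker, LinearMap.mem_ker] at this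
    rw [← hy, this]
  · refine Submodule.codisjoint_iff_exists_add_eq.2 fun x ↦ ?_
    obtain ⟨y, hy⟩ : (f ^ n) x ∈ LinearMap.range (f ^ (n + n)) := hrange ▸ ⟨x, rfl⟩
    refine ⟨x - (f ^ n) y, (f ^ n) y, ?_, ⟨y, rfl⟩, sub_add_cancel _ _⟩
    rw [LinearMap.mem_ker, map_sub, ← Module.End.mul_apply, ← pow_add, hy, sub_self]

lemma LinearMap.finrank_ker_eq_finrank_quotient_range {K : Type*} [DivisionRing K] [Module K M]
    {S : End K M} {N R : Submodule K M} (hNR : IsCompl N R) [FiniteDimensional K N]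
    (hSN : ∀ x ∈ N, S x ∈ N) (hSR : ∀ x ∈ R, S x ∈ R) (hRS : R ≤ LinearMap.range S)
    (hker : LinearMap.ker S ≤ N) :
    finrank K (LinearMap.ker S) = finrank K (M ⧸ LinearMap.range S) := by
  let φ := (LinearMap.range S).mkQ ∘ₗ N.subtype
  have hφ : Function.Surjective φ := by
    rintro ⟨x⟩
    obtain ⟨n, r, hn, hr, rfl⟩ := Submodule.codisjoint_iff_exists_add_eq.1 hNR.codisjoint x
    refine ⟨⟨n, hn⟩, (Submodule.Quotient.eq _).2 ?_⟩
    simpa using neg_mem (hRS hr)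
  have hker_φ : LinearMap.ker φ = LinearMap.range (LinearMap.restrict S hSN) := by
    ext ⟨x, hx⟩
    simp only [φ, LinearMap.mem_ker, LinearMap.comp_apply, Submodule.subtype_apply,
      Submodule.mkQ_apply, Submodule.Quotient.mk_eq_zero, LinearMap.mem_range]
    constructor
    · rintro ⟨w, rfl⟩
      obtain ⟨n, r, hn, hr, rfl⟩ := Submodule.codisjoint_iff_exists_add_eq.1 hNR.codisjoint w
      have hSr : S r = 0 := Submodule.disjoint_def.1 hNR.disjoint _
        (by simpa using N.sub_mem hx (hSN n hn)) (hSR r hr)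
      exact ⟨⟨n, hn⟩, Subtype.ext (by simp [hSr])⟩
    · rintro ⟨⟨n, hn⟩, h⟩
      exact ⟨n, congrArg Subtype.val h⟩
  have h₁ := (LinearMap.restrict S hSN).finrank_range_add_finrank_ker
  have h₂ := φ.finrank_range_add_finrank_ker
  rw [LinearMap.ker_restrict, (Submodule.comapSubtypeEquivOfLe hker).finrank_eq] at h₁
  rw [LinearMap.range_eq_top.2 hφ, finrank_top, hker_φ] at h₂
  omega

end Fitting

namespace ContinuousLinearMap

section IndexZero

variable {𝕜 U V W : Type*} [DivisionRing 𝕜] [AddCommGroup U] [Module 𝕜 U] [TopologicalSpace U]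
  [AddCommGroup V] [Module 𝕜 V] [TopologicalSpace V] [AddCommGroup W] [Module 𝕜 W]
  [TopologicalSpace W]

def IsFredholmIndexZero (f : V →L[𝕜] W) : Prop :=
  FiniteDimensional 𝕜 f.ker ∧ IsClosed (f.range : Set W) ∧ FiniteDimensional 𝕜 (W ⧸ f.range) ∧
    finrank 𝕜 f.ker = finrank 𝕜 (W ⧸ f.range)

lemma IsFredholmIndexZero.comp_continuousLinearEquiv {S : V →L[𝕜] W} (hS : S.IsFredholmIndexZero)
    (e : U ≃L[𝕜] V) : (S ∘L (e : U →L[𝕜] V)).IsFredholmIndexZero := by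
  have hrange : (S ∘L (e : U →L[𝕜] V)).range = S.range :=
    LinearMap.range_comp_of_range_eq_top _ e.toLinearEquiv.range
  let eker : (S ∘L (e : U →L[𝕜] V)).ker ≃ₗ[𝕜] S.ker := e.toLinearEquiv.ofSubmodules _ _ <| by
    rw [toLinearMap_comp, LinearMap.ker_comp]
    exact Submodule.map_comap_eq_of_surjective e.surjective _
  obtain ⟨h₁, h₂, h₃, h₄⟩ := hS
  exact ⟨eker.symm.finiteDimensional, hrange ▸ h₂, hrange ▸ h₃, eker.finrank_eq.trans (hrange ▸ h₄)⟩

end IndexZero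

variable {𝕜 W : Type*} [RCLike 𝕜] [NormedAddCommGroup W] [NormedSpace 𝕜 W] {T : W →L[𝕜] W}

lemma isCompactOperator_pow_sub_one (hT : IsCompactOperator ⇑(T - 1)) (n : ℕ) :
    IsCompactOperator ⇑(T ^ n - 1) := by
  rw [← geom_sum_mul]
  exact hT.clm_comp _

lemma finiteDimensional_ker_of_isCompactOperator_sub_one (hT : IsCompactOperator ⇑(T - 1)) :
    FiniteDimensional 𝕜 T.ker := by
  have hK : ∀ x : T.ker, (-⇑(T - 1) ∘ T.ker.subtypeL) x ∈ T.ker := fun x ↦ by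
    have : T x = 0 := x.2
    simp [this]
  have hid : Set.codRestrict _ (T.ker : Set W) hK = id := by
    ext x
    have : T x = 0 := x.2
    simp [this]
  exact .of_isCompactOperator_id
    (hid ▸ (hT.neg.comp_clm T.ker.subtypeL).codRestrict hK T.isClosed_ker)

lemma exists_tendsto_subseq_of_tendsto_apply (hT : IsCompactOperator ⇑(T - 1)) {x : ℕ → W}
    {C : ℝ} (hx : ∀ n, ‖x n‖ ≤ C) {y : W} (hy : Tendsto (fun n ↦ T (x n)) atTop (𝓝 y)) :
    ∃ (z : W) (φ : ℕ → ℕ), StrictMono φ ∧ Tendsto (fun n ↦ x (φ n)) atTop (𝓝 z) ∧ T z = y := by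
  obtain ⟨w, φ, hφ, hw⟩ := hT.exists_strictMono_tendsto hx
  have hTx := hy.comp hφ.tendsto_atTop
  have hx : Tendsto (fun n ↦ x (φ n)) atTop (𝓝 (y - w)) := by
    simpa using hTx.sub hw
  exact ⟨y - w, φ, hφ, hx, tendsto_nhds_unique ((T.continuous.tendsto _).comp hx) hTx⟩

lemma exists_pos_mul_norm_le_norm_apply (hT : IsCompactOperator ⇑(T - 1)) {C : Submodule 𝕜 W}
    (hC : IsClosed (C : Set W)) (hCT : Disjoint C T.ker) :
    ∃ c > 0, ∀ x ∈ C, c * ‖x‖ ≤ ‖T x‖ := by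
  by_contra! h
  have : ∀ n : ℕ, ∃ x ∈ C, ‖x‖ = 1 ∧ ‖T x‖ < 1 / (n + 1) := fun n ↦ by
    obtain ⟨x, hxC, hx⟩ := h (1 / (n + 1)) (by positivity)
    have hx0 : x ≠ 0 := by rintro rfl; simp at hx
    refine ⟨(‖x‖⁻¹ : 𝕜) • x, C.smul_mem _ hxC, norm_smul_inv_norm hx0, ?_⟩
    rw [map_smul, norm_smul, norm_inv, RCLike.norm_ofReal, abs_norm,
      inv_mul_lt_iff₀ (norm_pos_iff.2 hx0), mul_comm]
    exact hx
  choose x hxC hx1 hTx using this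
  have hlim : Tendsto (fun n ↦ T (x n)) atTop (𝓝 0) :=
    squeeze_zero_norm (fun n ↦ (hTx n).le) tendsto_one_div_add_atTop_nhds_zero_nat
  obtain ⟨z, φ, -, hz, hTz⟩ :=
    exists_tendsto_subseq_of_tendsto_apply hT (fun n ↦ (hx1 n).le) hlim
  have hzC : z ∈ C := hC.mem_of_tendsto hz (.of_forall fun n ↦ hxC _)
  have hz1 : ‖z‖ = 1 := tendsto_nhds_unique hz.norm (by simp [hx1])
  simp [Submodule.disjoint_def.1 hCT z hzC hTz] at hz1

lemma isClosed_range_of_isCompactOperator_sub_one (hT : IsCompactOperator ⇑(T - 1)) :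
    IsClosed (T.range : Set W) := by
  have := finiteDimensional_ker_of_isCompactOperator_sub_one hT
  obtain ⟨C, hC, hCT⟩ :=
    (Submodule.ClosedComplemented.of_finiteDimensional T.ker).exists_isClosed_isCompl
  obtain ⟨c, hc, hbdd⟩ := exists_pos_mul_norm_le_norm_apply hT hC hCT.disjoint.symm
  refine IsSeqClosed.isClosed fun y y₀ hy hlim ↦ ?_
  have : ∀ n, ∃ x ∈ C, T x = y n := fun n ↦ by
    obtain ⟨w, hw⟩ := hy n
    obtain ⟨k, x, hk, hx, rfl⟩ := Submodule.codisjoint_iff_exists_add_eq.1 hCT.codisjoint w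
    exact ⟨x, hx, by simpa [show T k = 0 from hk] using hw⟩
  choose x hxC hTx using this
  obtain ⟨M, hM⟩ := (Metric.isBounded_range_of_tendsto y hlim).exists_norm_le
  have hx : ∀ n, ‖x n‖ ≤ c⁻¹ * M := fun n ↦
    (le_inv_mul_iff₀ hc).2 ((hbdd _ (hxC n)).trans (hTx n ▸ hM _ (mem_range_self n)))
  obtain ⟨z, -, -, -, hz⟩ :=
    exists_tendsto_subseq_of_tendsto_apply hT hx (by simpa only [hTx] using hlim)
  exact ⟨z, hz⟩

lemma exists_succ_eq_of_monotone (hT : IsCompactOperator ⇑(T - 1)) {F : ℕ → Submodule 𝕜 W}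
    (hF : ∀ n, IsClosed (F n : Set W)) (hmono : Monotone F)
    (hTF : ∀ n, MapsTo T (F (n + 1)) (F n)) : ∃ n, F (n + 1) = F n := by
  obtain ⟨c, hc⟩ := NormedField.exists_one_lt_norm 𝕜
  by_contra! hne
  choose u hu hnorm hsep using fun n ↦ Submodule.exists_norm_le_one_le_norm_sub_of_lt hc
    (lt_add_one _) (hF n) ((hmono n.le_succ).lt_of_ne (hne n).symm)
  obtain ⟨m, n, hmn, hlt⟩ := hT.exists_lt_norm_sub_lt hnorm one_pos
  have hy : T (u n) - T (u m) + u m ∈ F n :=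
    add_mem (sub_mem (hTF n (hu n)) (hmono hmn.le (hTF m (hu m)))) (hmono hmn (hu m))
  refine hlt.not_ge ?_
  calc 1 ≤ ‖u n - (T (u n) - T (u m) + u m)‖ := hsep n _ hy
    _ = ‖(T - 1) (u n) - (T - 1) (u m)‖ := by
      rw [← norm_neg]
      congr 1
      simp only [sub_apply, one_apply_eq_self]
      abel

lemma exists_succ_eq_of_antitone (hT : IsCompactOperator ⇑(T - 1)) {G : ℕ → Submodule 𝕜 W}
    (hG : ∀ n, IsClosed (G n : Set W)) (hanti : Antitone G)
    (hTG : ∀ n, MapsTo T (G n) (G (n + 1))) : ∃ n, G (n + 1) = G n := by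
  obtain ⟨c, hc⟩ := NormedField.exists_one_lt_norm 𝕜
  by_contra! hne
  choose u hu hnorm hsep using fun n ↦ Submodule.exists_norm_le_one_le_norm_sub_of_lt hc
    (lt_add_one _) (hG (n + 1)) ((hanti n.le_succ).lt_of_ne (hne n))
  obtain ⟨m, n, hmn, hlt⟩ := hT.exists_lt_norm_sub_lt hnorm one_pos
  have hy : T (u m) - T (u n) + u n ∈ G (m + 1) :=
    add_mem (sub_mem (hTG m (hu m)) (hanti (by omega) (hTG n (hu n)))) (hanti hmn (hu n))
  refine hlt.not_ge ?_
  calc 1 ≤ ‖u m - (T (u m) - T (u n) + u n)‖ := hsep m _ hy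
    _ = ‖(T - 1) (u n) - (T - 1) (u m)‖ := by
      congr 1
      simp only [sub_apply, one_apply_eq_self]
      abel

theorem exists_isCompl_ker_pow_range_pow (hT : IsCompactOperator ⇑(T - 1)) :
    ∃ n, IsCompl (T ^ (n + 1)).ker (T ^ (n + 1)).range := by
  simp only [toLinearMap_pow]
  set f : Module.End 𝕜 W := (T : W →ₗ[𝕜] W)
  obtain ⟨a, ha⟩ := exists_succ_eq_of_monotone hT (F := fun n ↦ LinearMap.ker (f ^ n))
    (fun n ↦ by simpa only [toLinearMap_pow] using (T ^ n).isClosed_ker) f.iterateKer.monotone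
    (fun n x hx ↦ by rwa [SetLike.mem_coe, LinearMap.mem_ker, pow_succ, Module.End.mul_apply] at hx)
  obtain ⟨b, hb⟩ := exists_succ_eq_of_antitone hT (G := fun n ↦ LinearMap.range (f ^ n))
    (fun n ↦ by simpa only [toLinearMap_pow] using
      isClosed_range_of_isCompactOperator_sub_one (isCompactOperator_pow_sub_one hT n))
    (fun _ _ h ↦ f.iterateRange.monotone h)
    (fun n _ ⟨y, hy⟩ ↦ ⟨y, by rw [pow_succ', Module.End.mul_apply, hy]; rfl⟩)
  have hker (m : ℕ) (hm : a ≤ m) : LinearMap.ker (f ^ m) = LinearMap.ker (f ^ a) := by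
    obtain ⟨k, rfl⟩ := Nat.exists_eq_add_of_le hm
    exact (Module.End.ker_pow_constant ha.symm k).symm
  have hrange (m : ℕ) (hm : b ≤ m) : LinearMap.range (f ^ m) = LinearMap.range (f ^ b) := by
    obtain ⟨k, rfl⟩ := Nat.exists_eq_add_of_le hm
    exact Module.End.range_pow_add_eq_of_range_pow_succ_eq hb k
  refine ⟨a + b, Module.End.isCompl_ker_pow_range_pow ?_ ?_⟩
  · exact (hker _ (by omega)).trans (hker _ (by omega)).symm
  · exact (hrange _ (by omega)).trans (hrange _ (by omega)).symm

theorem isFredholmIndexZero_of_commute (hT : IsCompactOperator ⇑(T - 1)) {S : W →L[𝕜] W}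
    (hST : Commute S T) (hker : S.ker ≤ T.ker) (hrange : T.range ≤ S.range) :
    S.IsFredholmIndexZero := by
  obtain ⟨n, hNR⟩ := exists_isCompl_ker_pow_range_pow hT
  have hTn := isCompactOperator_pow_sub_one hT (n + 1)
  have := finiteDimensional_ker_of_isCompactOperator_sub_one hTn
  have : FiniteDimensional 𝕜 (W ⧸ (T ^ (n + 1)).range) :=
    (Submodule.quotientEquivOfIsCompl _ _ hNR.symm).symm.finiteDimensional
  have hcomm (x : W) : (T ^ (n + 1)) (S x) = S ((T ^ (n + 1)) x) :=
    (DFunLike.congr_fun ((hST.pow_right (n + 1)).eq) x).symm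
  have hSN : ∀ x ∈ (T ^ (n + 1)).ker, S x ∈ (T ^ (n + 1)).ker :=
    fun x (hx : (T ^ (n + 1)) x = 0) ↦ show (T ^ (n + 1)) (S x) = 0 by rw [hcomm, hx, map_zero]
  have hSR : ∀ x ∈ (T ^ (n + 1)).range, S x ∈ (T ^ (n + 1)).range := fun _ ⟨y, hy⟩ ↦
    ⟨S y, (hcomm y).trans (congrArg S hy)⟩
  have hRS : (T ^ (n + 1)).range ≤ S.range := by
    refine le_trans ?_ hrange
    rw [pow_succ', toLinearMap_mul]
    exact LinearMap.range_comp_le_range _ _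
  have hkerN : S.ker ≤ (T ^ (n + 1)).ker := by
    refine hker.trans ?_
    rw [pow_succ, toLinearMap_mul]
    exact LinearMap.ker_le_ker_comp _ _
  exact ⟨Submodule.finiteDimensional_of_le hkerN,
    Submodule.isClosed_mono_of_finiteDimensional_quotient
      (isClosed_range_of_isCompactOperator_sub_one hTn) hRS,
    Submodule.CoFG.of_le hRS inferInstance,
    LinearMap.finrank_ker_eq_finrank_quotient_range hNR hSN hSR hRS hkerN⟩

theorem isFredholmIndexZero_one_add {D : W →L[𝕜] W} (hD : IsCompactOperator ⇑(D ∘L D)) :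
    (1 + D).IsFredholmIndexZero := by
  have hT : IsCompactOperator ⇑((1 - D * D) - 1) := by
    rw [sub_sub_cancel_left]
    exact hD.neg
  refine isFredholmIndexZero_of_commute hT ((commute_iff_eq _ _).2 (by noncomm_ring)) ?_ ?_
  · rw [show 1 - D * D = (1 - D) * (1 + D) by noncomm_ring, toLinearMap_mul]
    exact LinearMap.ker_le_ker_comp _ _
  · rw [show 1 - D * D = (1 + D) * (1 - D) by noncomm_ring, toLinearMap_mul]
    exact LinearMap.range_comp_le_range _ _

end ContinuousLinearMap

theorem fredholm_index_zero_of_compact_square_general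
    {V W : Type*} [NormedAddCommGroup V] [NormedSpace ℝ V]
    [NormedAddCommGroup W] [NormedSpace ℝ W]
    (A : V ≃L[ℝ] W) (B : V →L[ℝ] W)
    (hcomp : IsCompactOperator
      ((B ∘L (A.symm : W →L[ℝ] V)) ∘L (B ∘L (A.symm : W →L[ℝ] V)))) :
    FiniteDimensional ℝ (LinearMap.ker (((A : V →L[ℝ] W) + B : V →L[ℝ] W) : V →ₗ[ℝ] W)) ∧
    IsClosed (LinearMap.range (((A : V →L[ℝ] W) + B : V →L[ℝ] W) : V →ₗ[ℝ] W) : Set W) ∧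
    FiniteDimensional ℝ (W ⧸ LinearMap.range (((A : V →L[ℝ] W) + B : V →L[ℝ] W) : V →ₗ[ℝ] W)) ∧
    Module.finrank ℝ (LinearMap.ker (((A : V →L[ℝ] W) + B : V →L[ℝ] W) : V →ₗ[ℝ] W)) =
      Module.finrank ℝ (W ⧸ LinearMap.range (((A : V →L[ℝ] W) + B : V →L[ℝ] W) : V →ₗ[ℝ] W)) := by
  have hAB : (A : V →L[ℝ] W) + B = (1 + B ∘L (A.symm : W →L[ℝ] V)) ∘L (A : V →L[ℝ] W) := by
    ext x
    simp
  rw [hAB]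
  exact (ContinuousLinearMap.isFredholmIndexZero_one_add hcomp).comp_continuousLinearEquiv A

/-- Let `𝒜 : V → W` be an isomorphism of Banach spaces and `ℬ : V → W` bounded such
that `(ℬ𝒜⁻¹)² : W → W` is compact. Then `𝒜 + ℬ` is a Fredholm operator of index zero:
finite-dimensional kernel, closed range of finite codimension, and
`dim ker = codim ran`. -/
theorem fredholm_index_zero_of_compact_square
    {V W : Type*} [NormedAddCommGroup V] [NormedSpace ℝ V] [CompleteSpace V]
    [NormedAddCommGroup W] [NormedSpace ℝ W] [CompleteSpace W]
    (A : V ≃L[ℝ] W) (B : V →L[ℝ] W)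
    (hcomp : IsCompactOperator
      ((B ∘L (A.symm : W →L[ℝ] V)) ∘L (B ∘L (A.symm : W →L[ℝ] V)))) :
    FiniteDimensional ℝ (LinearMap.ker (((A : V →L[ℝ] W) + B : V →L[ℝ] W) : V →ₗ[ℝ] W)) ∧
    IsClosed (LinearMap.range (((A : V →L[ℝ] W) + B : V →L[ℝ] W) : V →ₗ[ℝ] W) : Set W) ∧
    FiniteDimensional ℝ (W ⧸ LinearMap.range (((A : V →L[ℝ] W) + B : V →L[ℝ] W) : V →ₗ[ℝ] W)) ∧
    Module.finrank ℝ (LinearMap.ker (((A : V →L[ℝ] W) + B : V →L[ℝ] W) : V →ₗ[ℝ] W)) =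
      Module.finrank ℝ (W ⧸ LinearMap.range (((A : V →L[ℝ] W) + B : V →L[ℝ] W) : V →ₗ[ℝ] W)) :=
  fredholm_index_zero_of_compact_square_general A B hcomp
end
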